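/- arXiv:2208.01519 — 2 statements merged into one kernel-verified Lean document; each statement's English description precedes it below -/
import Mathlib

section
/- Let n ≥ 3. If W is a resolving set of HG(n,n,n;3) of size 2n − 1, then for each i ∈ {1,2,3} there is exactly one value a ∈ [n] with |W_{i,a}| = 1, and |W_{i,b}| = 2 for the remaining n − 1 values b ∈ [n]. (In the language of the landmark graph: exactly one loop and exactly n − 1 plain edges of each color.) -/
/-- The generalized Hamming graph `HG(n₁,n₂,n₃;3)`: vertices are triples
(modeled with `Fin nᵢ`), adjacent iff they differ in all three coordinates. -/
def HG (n₁ n₂ n₃ : ℕ) : SimpleGraph (Fin n₁ × Fin n₂ × Fin n₃) where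
  Adj x y := x.1 ≠ y.1 ∧ x.2.1 ≠ y.2.1 ∧ x.2.2 ≠ y.2.2
  symm := ⟨fun x y h => ⟨h.1.symm, h.2.1.symm, h.2.2.symm⟩⟩
  loopless := ⟨fun x h => h.1 rfl⟩

/-- `W` is a resolving set for `HG(n₁,n₂,n₃;3)`: every pair of distinct vertices not
in `W` is resolved by some landmark in `W`. -/
def IsResolving {n₁ n₂ n₃ : ℕ} (W : Set (Fin n₁ × Fin n₂ × Fin n₃)) : Prop :=
  ∀ x y : Fin n₁ × Fin n₂ × Fin n₃, x ∉ W → y ∉ W → x ≠ y →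
    ∃ w ∈ W, (HG n₁ n₂ n₃).dist x w ≠ (HG n₁ n₂ n₃).dist y w

/-- The metric dimension of `HG(n₁,n₂,n₃;3)`: minimum size of a resolving set. -/
noncomputable def metricDim (n₁ n₂ n₃ : ℕ) : ℕ :=
  sInf {k | ∃ W : Set (Fin n₁ × Fin n₂ × Fin n₃), IsResolving W ∧ W.ncard = k}

/-- The block `W_{1,a}`: landmarks whose first coordinate is `a`. -/
def block1 {n₁ n₂ n₃ : ℕ} (W : Set (Fin n₁ × Fin n₂ × Fin n₃)) (a : Fin n₁) :
    Set (Fin n₁ × Fin n₂ × Fin n₃) := {w ∈ W | w.1 = a}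

/-- The block `W_{2,a}`: landmarks whose second coordinate is `a`. -/
def block2 {n₁ n₂ n₃ : ℕ} (W : Set (Fin n₁ × Fin n₂ × Fin n₃)) (a : Fin n₂) :
    Set (Fin n₁ × Fin n₂ × Fin n₃) := {w ∈ W | w.2.1 = a}

/-- The block `W_{3,a}`: landmarks whose third coordinate is `a`. -/
def block3 {n₁ n₂ n₃ : ℕ} (W : Set (Fin n₁ × Fin n₂ × Fin n₃)) (a : Fin n₃) :
    Set (Fin n₁ × Fin n₂ × Fin n₃) := {w ∈ W | w.2.2 = a}

/-!
For `n ≥ 3` the graph has diameter two, so a landmark `w` separates two vertices exactly when it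
is adjacent to one of them and not to the other. If two blocks `W_{1,a}`, `W_{1,a'}` together
held at most two landmarks, a point `p` of the `n × n` grid could be found, off their last two
coordinates but on a common row or column with each of them; no landmark would then separate
`(a, p)` from `(a', p)`. So any two blocks of the first colour hold at least three landmarks,
and with `2n - 1` landmarks in total this forces one block of size one and all others of size
two. Cyclically permuting the coordinates is an isomorphism of Hamming graphs, which carries
the first colour to the other two.
-/

theorem Set.exists_subset_pair_of_ncard_le_two {α : Type*} [Nonempty α] {s : Set α}
    (hs : s.Finite) (h : s.ncard ≤ 2) : ∃ u v, s ⊆ {u, v} := by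
  rcases s.eq_empty_or_nonempty with rfl | ⟨u, hu⟩
  · exact ⟨Classical.arbitrary α, Classical.arbitrary α, Set.empty_subset _⟩
  have hrest : (s \ {u}).ncard ≤ 1 := by
    rw [Set.ncard_sdiff_singleton_of_mem hu]
    omega
  obtain ⟨v, hv⟩ := (Set.ncard_le_one_iff_subset_singleton hs.sdiff).1 hrest
  refine ⟨u, v, fun x hx => ?_⟩
  by_cases hxu : x = u
  · exact .inl hxu
  · exact .inr (hv ⟨hx, hxu⟩)

theorem Prod.exists_ne_ne_cross {α β : Type*} (hα : 3 ≤ ENat.card α) (hβ : 3 ≤ ENat.card β)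
    (s t : α × β) :
    ∃ p : α × β, p ≠ s ∧ p ≠ t ∧ (s.1 = p.1 ∨ s.2 = p.2) ∧ (t.1 = p.1 ∨ t.2 = p.2) := by
  by_cases h₁ : s.1 = t.1
  · obtain ⟨c, hcs, hct⟩ := ENat.exists_ne_ne_of_three_le hβ s.2 t.2
    exact ⟨(s.1, c), by simp [Prod.ext_iff, hcs], by simp [Prod.ext_iff, hct], .inl rfl,
      .inl h₁.symm⟩
  by_cases h₂ : s.2 = t.2
  · obtain ⟨c, hcs, hct⟩ := ENat.exists_ne_ne_of_three_le hα s.1 t.1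
    exact ⟨(c, s.2), by simp [Prod.ext_iff, hcs], by simp [Prod.ext_iff, hct], .inr rfl,
      .inr h₂.symm⟩
  exact ⟨(s.1, t.2), by simp [Prod.ext_iff, Ne.symm h₂], by simp [Prod.ext_iff, h₁], .inl rfl,
    .inr rfl⟩

theorem exists_eq_one_and_eq_two_of_sum_eq {ι : Type*} [Fintype ι] [DecidableEq ι]
    (hι : 3 ≤ Fintype.card ι) (g : ι → ℕ) (hsum : ∑ i, g i = 2 * Fintype.card ι - 1)
    (hpair : ∀ i j, i ≠ j → 3 ≤ g i + g j) : ∃ i, g i = 1 ∧ ∀ j, j ≠ i → g j = 2 := by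
  obtain ⟨i, hi⟩ : ∃ i, g i ≤ 1 := by
    by_contra! h
    have := Finset.card_nsmul_le_sum Finset.univ g 2 fun i _ => h i
    rw [Finset.card_univ, smul_eq_mul, hsum] at this
    omega
  have hcard : (Finset.univ.erase i).card = Fintype.card ι - 1 := by
    simp [Finset.card_erase_of_mem]
  have hrest : ∑ j ∈ Finset.univ.erase i, g j = 2 * Fintype.card ι - 1 - g i := by
    have := Finset.add_sum_erase Finset.univ g (Finset.mem_univ i)
    omega
  have hlow : ∀ k, ∀ j ∈ Finset.univ.erase i, k + g i ≤ 3 → k ≤ g j := fun k j hj hk => by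
    have := hpair i j (Finset.ne_of_mem_erase hj).symm
    omega
  obtain h0 | h1 : g i = 0 ∨ g i = 1 := by omega
  · have := Finset.card_nsmul_le_sum _ g 3 fun j hj => hlow 3 j hj (by omega)
    rw [hcard, hrest, h0, smul_eq_mul] at this
    omega
  refine ⟨i, h1, fun j hj => ?_⟩
  have hlow2 : ∀ j ∈ Finset.univ.erase i, 2 ≤ g j := fun j hj => hlow 2 j hj (by omega)
  have heq : ∑ j ∈ Finset.univ.erase i, 2 = ∑ j ∈ Finset.univ.erase i, g j := by
    rw [hrest, Finset.sum_const, hcard, smul_eq_mul]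
    omega
  exact ((Finset.sum_eq_sum_iff_of_le hlow2).1 heq j (by simpa using hj)).symm

namespace HG

variable {n₁ n₂ n₃ : ℕ}

theorem exists_adj_adj (h₁ : 3 ≤ n₁) (h₂ : 3 ≤ n₂) (h₃ : 3 ≤ n₃)
    (x y : Fin n₁ × Fin n₂ × Fin n₃) : ∃ z, (HG n₁ n₂ n₃).Adj x z ∧ (HG n₁ n₂ n₃).Adj z y := by
  obtain ⟨c₁, hx₁, hy₁⟩ := ENat.exists_ne_ne_of_three_le (by simpa using h₁) x.1 y.1
  obtain ⟨c₂, hx₂, hy₂⟩ := ENat.exists_ne_ne_of_three_le (by simpa using h₂) x.2.1 y.2.1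
  obtain ⟨c₃, hx₃, hy₃⟩ := ENat.exists_ne_ne_of_three_le (by simpa using h₃) x.2.2 y.2.2
  exact ⟨(c₁, c₂, c₃), ⟨hx₁.symm, hx₂.symm, hx₃.symm⟩, ⟨hy₁, hy₂, hy₃⟩⟩

theorem dist_eq_two (h₁ : 3 ≤ n₁) (h₂ : 3 ≤ n₂) (h₃ : 3 ≤ n₃)
    {x y : Fin n₁ × Fin n₂ × Fin n₃} (hxy : x ≠ y) (hadj : ¬(HG n₁ n₂ n₃).Adj x y) :
    (HG n₁ n₂ n₃).dist x y = 2 := by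
  obtain ⟨z, hxz, hzy⟩ := exists_adj_adj h₁ h₂ h₃ x y
  have hle := SimpleGraph.dist_le (hxz.toWalk.append hzy.toWalk)
  have hlt := (hxz.reachable.trans hzy.reachable).one_lt_dist_of_ne_of_not_adj hxy hadj
  simp only [SimpleGraph.Walk.length_append, SimpleGraph.Adj.toWalk, SimpleGraph.Walk.length_cons,
    SimpleGraph.Walk.length_nil] at hle
  omega

theorem dist_eq_dist_iff (h₁ : 3 ≤ n₁) (h₂ : 3 ≤ n₂) (h₃ : 3 ≤ n₃)
    {x y w : Fin n₁ × Fin n₂ × Fin n₃} (hx : x ≠ w) (hy : y ≠ w) :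
    (HG n₁ n₂ n₃).dist x w = (HG n₁ n₂ n₃).dist y w ↔
      ((HG n₁ n₂ n₃).Adj x w ↔ (HG n₁ n₂ n₃).Adj y w) := by
  by_cases hxw : (HG n₁ n₂ n₃).Adj x w <;> by_cases hyw : (HG n₁ n₂ n₃).Adj y w <;>
    simp [hxw, hyw, SimpleGraph.dist_eq_one_iff_adj.2, dist_eq_two h₁ h₂ h₃ hx,
      dist_eq_two h₁ h₂ h₃ hy]

theorem adj_iff_adj_of_snd_eq {x y w : Fin n₁ × Fin n₂ × Fin n₃} (hxy : x.2 = y.2)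
    (hw : w.1 = x.1 ∨ w.1 = y.1 → w.2.1 = x.2.1 ∨ w.2.2 = x.2.2) :
    (HG n₁ n₂ n₃).Adj x w ↔ (HG n₁ n₂ n₃).Adj y w := by
  obtain ⟨a, q, r⟩ := x
  obtain ⟨b, q', r'⟩ := y
  obtain ⟨rfl, rfl⟩ := Prod.ext_iff.1 hxy
  simp only [HG] at hw ⊢
  grind

def rotate : HG n₁ n₂ n₃ ≃g HG n₂ n₃ n₁ where
  toFun x := (x.2.1, x.2.2, x.1)
  invFun x := (x.2.2, x.1, x.2.1)
  left_inv _ := rfl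
  right_inv _ := rfl
  map_rel_iff' := by
    simp only [HG, Equiv.coe_fn_mk]
    tauto

theorem dist_rotate (h₁ : 3 ≤ n₁) (h₂ : 3 ≤ n₂) (h₃ : 3 ≤ n₃)
    (x y : Fin n₁ × Fin n₂ × Fin n₃) :
    (HG n₂ n₃ n₁).dist (rotate x) (rotate y) = (HG n₁ n₂ n₃).dist x y := by
  rcases eq_or_ne x y with rfl | hxy
  · simp
  by_cases hadj : (HG n₁ n₂ n₃).Adj x y
  · rw [SimpleGraph.dist_eq_one_iff_adj.2 hadj,
      SimpleGraph.dist_eq_one_iff_adj.2 (rotate.map_adj_iff.2 hadj)]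
  · rw [dist_eq_two h₁ h₂ h₃ hxy hadj,
      dist_eq_two h₂ h₃ h₁ (rotate.injective.ne hxy) (rotate.map_adj_iff.not.2 hadj)]

end HG

section Landmarks

variable {n₁ n₂ n₃ : ℕ} {W : Set (Fin n₁ × Fin n₂ × Fin n₃)}

theorem IsResolving.three_le_ncard_block1_add_ncard_block1 (h₁ : 3 ≤ n₁) (h₂ : 3 ≤ n₂)
    (h₃ : 3 ≤ n₃) (hW : IsResolving W) {a a' : Fin n₁} (haa' : a ≠ a') :
    3 ≤ (block1 W a).ncard + (block1 W a').ncard := by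
  by_contra! hsmall
  have : Nonempty (Fin n₁ × Fin n₂ × Fin n₃) :=
    ⟨(⟨0, by omega⟩, ⟨0, by omega⟩, ⟨0, by omega⟩)⟩
  obtain ⟨u, v, huv⟩ := Set.exists_subset_pair_of_ncard_le_two (Set.toFinite _)
    ((Set.ncard_union_le (block1 W a) (block1 W a')).trans (Nat.le_of_lt_succ hsmall))
  obtain ⟨p, hpu, hpv, hu, hv⟩ :=
    Prod.exists_ne_ne_cross (by simpa using h₂) (by simpa using h₃) u.2 v.2
  have hmem : ∀ w ∈ W, w.1 = a ∨ w.1 = a' → w = u ∨ w = v := fun w hw hw₁ =>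
    huv (hw₁.imp (fun h => ⟨hw, h⟩) (fun h => ⟨hw, h⟩))
  have hnot : ∀ b, b = a ∨ b = a' → ((b, p) : Fin n₁ × Fin n₂ × Fin n₃) ∉ W := by
    intro b hb hbW
    rcases hmem _ hbW hb with rfl | rfl
    exacts [hpu rfl, hpv rfl]
  obtain ⟨w, hw, hdist⟩ := hW (a, p) (a', p) (hnot a (.inl rfl)) (hnot a' (.inr rfl))
    (by simp [haa'])
  refine hdist ((HG.dist_eq_dist_iff h₁ h₂ h₃ (ne_of_mem_of_not_mem hw (hnot a (.inl rfl))).symm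
    (ne_of_mem_of_not_mem hw (hnot a' (.inr rfl))).symm).2 (HG.adj_iff_adj_of_snd_eq rfl ?_))
  intro hw₁
  rcases hmem w hw hw₁ with rfl | rfl
  exacts [hu, hv]

theorem sum_ncard_block1 (W : Set (Fin n₁ × Fin n₂ × Fin n₃)) :
    ∑ a, (block1 W a).ncard = W.ncard := by
  classical
  rw [Set.ncard_eq_toFinset_card', Finset.card_eq_sum_card_fiberwise (f := Prod.fst)
    (t := Finset.univ) fun _ _ => Finset.mem_univ _]
  refine Finset.sum_congr rfl fun a _ => ?_
  rw [← Set.ncard_coe_finset]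
  congr 1
  ext w
  simp [block1]

theorem IsResolving.exists_ncard_block1_eq_one (h₁ : 3 ≤ n₁) (h₂ : 3 ≤ n₂) (h₃ : 3 ≤ n₃)
    (hW : IsResolving W) (hcard : W.ncard = 2 * n₁ - 1) :
    ∃ a, (block1 W a).ncard = 1 ∧ ∀ b, b ≠ a → (block1 W b).ncard = 2 :=
  exists_eq_one_and_eq_two_of_sum_eq (by simpa using h₁) _
    (by simpa [sum_ncard_block1] using hcard)
    fun _ _ h => hW.three_le_ncard_block1_add_ncard_block1 h₁ h₂ h₃ h

theorem IsResolving.image_rotate (h₁ : 3 ≤ n₁) (h₂ : 3 ≤ n₂) (h₃ : 3 ≤ n₃)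
    (hW : IsResolving W) : IsResolving (HG.rotate '' W) := by
  intro x y hx hy hxy
  obtain ⟨x, rfl⟩ := HG.rotate.surjective x
  obtain ⟨y, rfl⟩ := HG.rotate.surjective y
  obtain ⟨w, hw, hdist⟩ := hW x y (fun h => hx ⟨x, h, rfl⟩) (fun h => hy ⟨y, h, rfl⟩)
    (ne_of_apply_ne _ hxy)
  exact ⟨HG.rotate w, ⟨w, hw, rfl⟩, by rwa [HG.dist_rotate h₁ h₂ h₃, HG.dist_rotate h₁ h₂ h₃]⟩

theorem ncard_image_rotate : (HG.rotate '' W).ncard = W.ncard :=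
  Set.ncard_image_of_injective W HG.rotate.injective

theorem block1_image_rotate (a : Fin n₂) :
    block1 (HG.rotate '' W) a = HG.rotate '' block2 W a := by
  ext x
  constructor
  · rintro ⟨⟨w, hw, rfl⟩, h⟩
    exact ⟨w, ⟨hw, h⟩, rfl⟩
  · rintro ⟨w, ⟨hw, h⟩, rfl⟩
    exact ⟨⟨w, hw, rfl⟩, h⟩

theorem block2_image_rotate (a : Fin n₃) :
    block2 (HG.rotate '' W) a = HG.rotate '' block3 W a := by
  ext x
  constructor
  · rintro ⟨⟨w, hw, rfl⟩, h⟩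
    exact ⟨w, ⟨hw, h⟩, rfl⟩
  · rintro ⟨w, ⟨hw, h⟩, rfl⟩
    exact ⟨⟨w, hw, rfl⟩, h⟩

end Landmarks

theorem stmt4 (n : ℕ) (hn : 3 ≤ n) (W : Set (Fin n × Fin n × Fin n))
    (hW : IsResolving W) (hcard : W.ncard = 2 * n - 1) :
    (∃ a : Fin n, (block1 W a).ncard = 1 ∧ ∀ b : Fin n, b ≠ a → (block1 W b).ncard = 2) ∧
    (∃ a : Fin n, (block2 W a).ncard = 1 ∧ ∀ b : Fin n, b ≠ a → (block2 W b).ncard = 2) ∧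
    (∃ a : Fin n, (block3 W a).ncard = 1 ∧ ∀ b : Fin n, b ≠ a → (block3 W b).ncard = 2) := by
  have hW' := hW.image_rotate hn hn hn
  have hW'' := hW'.image_rotate hn hn hn
  refine ⟨hW.exists_ncard_block1_eq_one hn hn hn hcard, ?_, ?_⟩
  · simpa only [block1_image_rotate, ncard_image_rotate] using
      hW'.exists_ncard_block1_eq_one hn hn hn (by rwa [ncard_image_rotate])
  · simpa only [block1_image_rotate, block2_image_rotate, ncard_image_rotate] using
      hW''.exists_ncard_block1_eq_one hn hn hn (by rwa [ncard_image_rotate, ncard_image_rotate])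
end

section
/- The set of twenty-one vertices W = {(1,1,1), (1,2,2), (1,3,3), (1,4,10), (2,1,4), (2,2,5), (2,3,6), (2,4,1), (2,5,2), (2,6,3), (3,1,7), (3,2,8), (3,3,9), (3,4,4), (3,5,5), (3,6,6), (4,1,10), (4,4,7), (4,5,8), (4,6,9), (5,7,11)} is a resolving set for the Hamming graph HG(5,7,11;3), and it has minimum possible size: the metric dimension of HG(5,7,11;3) equals 21. -/
/-!
Since every coordinate takes at least three values, any two distinct non-adjacent vertices
have a common neighbour, so distances in `HG` are `0`, `1` or `2`. A landmark therefore
separates two other vertices exactly when it is adjacent to one of them and not the other.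

Lower bound: the non-landmarks `(a, b, c)` and `(a, b, c')` can only be separated by a landmark
in layer `c` or `c'` that differs from `(a, b)` in both of the first two coordinates. Given
any two landmarks `u, v`, the point `(a, b)` can be chosen different from both but in the row or
column of each, so `u` and `v` never separate this pair: any two layers together carry at least
three landmarks, and the `n₃` layer sizes add up to at least `2 n₃ - 1`.

Upper bound: the twenty-one landmarks give the `364` other vertices pairwise distinct
adjacency profiles, which is checked by evaluation.
-/

open Finset

theorem Fintype.two_mul_card_sub_one_le_sum {ι : Type*} [Fintype ι] [Nontrivial ι]
    (f : ι → ℕ) (hf : ∀ i j, i ≠ j → 3 ≤ f i + f j) :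
    2 * Fintype.card ι - 1 ≤ ∑ i, f i := by
  classical
  obtain ⟨i₀, hmin⟩ := Finite.exists_min f
  obtain ⟨j₀, hj₀⟩ := exists_ne i₀
  set rest := (univ.erase i₀).erase j₀
  have hsplit : ∑ i, f i = f i₀ + (f j₀ + ∑ i ∈ rest, f i) := by
    rw [add_sum_erase _ _ (mem_erase.2 ⟨hj₀, mem_univ _⟩), add_sum_erase _ _ (mem_univ _)]
  -- off the minimum `f i₀`, the bound `3 ≤ f i + f i₀ ≤ 2 * f i` forces `2 ≤ f i`
  have hrest : #rest • 2 ≤ ∑ i ∈ rest, f i := by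
    refine card_nsmul_le_sum _ _ _ fun i hi => ?_
    have := hf i i₀ (mem_erase.1 (mem_erase.1 hi).2).1
    have := hmin i
    omega
  rw [smul_eq_mul] at hrest
  have hcard : #rest = Fintype.card ι - 2 := by
    rw [card_erase_of_mem (mem_erase.2 ⟨hj₀, mem_univ _⟩), card_erase_of_mem (mem_univ _),
      card_univ, Nat.sub_sub]
  have := hf i₀ j₀ hj₀.symm
  have := Fintype.one_lt_card (α := ι)
  omega

theorem Set.three_le_ncard_of_forall_exists_ne_ne {α : Type*} [Nonempty α] {s : Set α}
    (hs : s.Finite) (h : ∀ u v, ∃ w ∈ s, w ≠ u ∧ w ≠ v) : 3 ≤ s.ncard := by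
  obtain ⟨u, hu, -⟩ := h (Classical.arbitrary α) (Classical.arbitrary α)
  obtain ⟨v, hv, hvu, -⟩ := h u u
  obtain ⟨w, hw, hwu, hwv⟩ := h u v
  exact (two_lt_ncard_iff hs).2 ⟨u, v, w, hu, hv, hw, hvu.symm, hwu.symm, hwv.symm⟩

theorem Fin.exists_ne_ne_and_eq_or_eq {m n : ℕ} (hm : 3 ≤ m) (hn : 3 ≤ n)
    (u v : Fin m × Fin n) :
    ∃ p : Fin m × Fin n, p ≠ u ∧ p ≠ v ∧ (p.1 = u.1 ∨ p.2 = u.2) ∧ (p.1 = v.1 ∨ p.2 = v.2) := by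
  by_cases h₁ : u.1 = v.1
  · obtain ⟨b, hbu, hbv⟩ := Fin.exists_ne_and_ne_of_two_lt u.2 v.2 hn
    exact ⟨(u.1, b), fun h => hbu (congrArg Prod.snd h), fun h => hbv (congrArg Prod.snd h),
      .inl rfl, .inl h₁⟩
  by_cases h₂ : u.2 = v.2
  · obtain ⟨a, hau, hav⟩ := Fin.exists_ne_and_ne_of_two_lt u.1 v.1 hm
    exact ⟨(a, u.2), fun h => hau (congrArg Prod.fst h), fun h => hav (congrArg Prod.fst h),
      .inr rfl, .inr h₂⟩
  exact ⟨(u.1, v.2), fun h => h₂ (Prod.ext_iff.1 h).2.symm, fun h => h₁ (Prod.ext_iff.1 h).1,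
    .inl rfl, .inr rfl⟩

def adjProfile {V : Type*} (G : SimpleGraph V) [DecidableRel G.Adj] (L : List V) (x : V) :
    List Bool :=
  L.map fun w => decide (G.Adj x w)

instance {n₁ n₂ n₃ : ℕ} : DecidableRel (HG n₁ n₂ n₃).Adj :=
  fun _ _ => inferInstanceAs (Decidable (_ ∧ _ ∧ _))

theorem metricDim_eq_of_isResolving {n₁ n₂ n₃ k : ℕ} {W : Set (Fin n₁ × Fin n₂ × Fin n₃)}
    (hW : IsResolving W) (hk : W.ncard = k)
    (hmin : ∀ W' : Set (Fin n₁ × Fin n₂ × Fin n₃), IsResolving W' → k ≤ W'.ncard) :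
    metricDim n₁ n₂ n₃ = k :=
  le_antisymm (Nat.sInf_le ⟨W, hW, hk⟩) <|
    le_csInf ⟨k, W, hW, hk⟩ fun _ ⟨W', hW', hk'⟩ => hk' ▸ hmin W' hW'

theorem ncard_eq_sum_ncard_block3 {n₁ n₂ n₃ : ℕ} (W : Set (Fin n₁ × Fin n₂ × Fin n₃)) :
    W.ncard = ∑ c, (block3 W c).ncard := by
  have hW : W = ⋃ c, block3 W c := by
    ext w
    simp [block3]
  conv_lhs => rw [hW]
  rw [Set.ncard_iUnion_of_finite (fun _ => Set.toFinite _), finsum_eq_sum_of_fintype]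
  exact fun c c' hcc => Set.disjoint_left.2 fun w hw hw' => hcc (hw.2.symm.trans hw'.2)

namespace HG

variable {n₁ n₂ n₃ : ℕ}

theorem dist_eq_ite (h₁ : 3 ≤ n₁) (h₂ : 3 ≤ n₂) (h₃ : 3 ≤ n₃)
    {x y : Fin n₁ × Fin n₂ × Fin n₃} (hxy : x ≠ y) :
    (HG n₁ n₂ n₃).dist x y = if (HG n₁ n₂ n₃).Adj x y then 1 else 2 := by
  split_ifs with hadj
  · exact SimpleGraph.dist_eq_one_iff_adj.2 hadj
  obtain ⟨z₁, hx₁, hy₁⟩ := Fin.exists_ne_and_ne_of_two_lt x.1 y.1 h₁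
  obtain ⟨z₂, hx₂, hy₂⟩ := Fin.exists_ne_and_ne_of_two_lt x.2.1 y.2.1 h₂
  obtain ⟨z₃, hx₃, hy₃⟩ := Fin.exists_ne_and_ne_of_two_lt x.2.2 y.2.2 h₃
  have hxz : (HG n₁ n₂ n₃).Adj x (z₁, z₂, z₃) := ⟨hx₁.symm, hx₂.symm, hx₃.symm⟩
  have hzy : (HG n₁ n₂ n₃).Adj (z₁, z₂, z₃) y := ⟨hy₁, hy₂, hy₃⟩
  have hle : (HG n₁ n₂ n₃).dist x y ≤ 2 := SimpleGraph.dist_le (hxz.toWalk.append hzy.toWalk)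
  have hreach : (HG n₁ n₂ n₃).Reachable x y := hxz.reachable.trans hzy.reachable
  have h0 : (HG n₁ n₂ n₃).dist x y ≠ 0 := fun h =>
    hxy (SimpleGraph.Reachable.dist_eq_zero_iff hreach |>.1 h)
  have h1 : (HG n₁ n₂ n₃).dist x y ≠ 1 := fun h => hadj (SimpleGraph.dist_eq_one_iff_adj.1 h)
  omega

theorem isResolving_iff (h₁ : 3 ≤ n₁) (h₂ : 3 ≤ n₂) (h₃ : 3 ≤ n₃)
    {W : Set (Fin n₁ × Fin n₂ × Fin n₃)} :
    IsResolving W ↔ ∀ x y, x ∉ W → y ∉ W → x ≠ y →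
      ∃ w ∈ W, ¬((HG n₁ n₂ n₃).Adj x w ↔ (HG n₁ n₂ n₃).Adj y w) := by
  refine forall₄_congr fun x y hx hy => imp_congr_right fun _ => exists_congr fun w =>
    and_congr_right fun hw => ?_
  rw [dist_eq_ite h₁ h₂ h₃ (by rintro rfl; exact hx hw),
    dist_eq_ite h₁ h₂ h₃ (by rintro rfl; exact hy hw)]
  split_ifs <;> simp_all

theorem exists_mem_block3_union_ne_ne (h₁ : 3 ≤ n₁) (h₂ : 3 ≤ n₂) (h₃ : 3 ≤ n₃)
    {W : Set (Fin n₁ × Fin n₂ × Fin n₃)}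
    (hW : IsResolving W) {c c' : Fin n₃} (hcc : c ≠ c') (u v : Fin n₁ × Fin n₂ × Fin n₃) :
    ∃ w ∈ block3 W c ∪ block3 W c', w ≠ u ∧ w ≠ v := by
  obtain ⟨⟨a, b⟩, hpu, hpv, hu, hv⟩ :=
    Fin.exists_ne_ne_and_eq_or_eq h₁ h₂ (u.1, u.2.1) (v.1, v.2.1)
  have hne : ∀ {w : Fin n₁ × Fin n₂ × Fin n₃}, w.1 = a → w.2.1 = b → w ≠ u ∧ w ≠ v := by
    rintro w rfl rfl
    exact ⟨fun h => hpu (h ▸ rfl), fun h => hpv (h ▸ rfl)⟩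
  by_cases hx : (a, b, c) ∈ W
  · exact ⟨_, .inl ⟨hx, rfl⟩, hne rfl rfl⟩
  by_cases hy : (a, b, c') ∈ W
  · exact ⟨_, .inr ⟨hy, rfl⟩, hne rfl rfl⟩
  obtain ⟨w, hw, hsep⟩ := (isResolving_iff h₁ h₂ h₃).1 hW _ _ hx hy
    (fun h => hcc (congrArg (·.2.2) h))
  simp only [HG] at hsep
  have hwa : a ≠ w.1 := fun h => hsep (by simp [h])
  have hwb : b ≠ w.2.1 := fun h => hsep (by simp [h])
  have hwc : c = w.2.2 ∨ c' = w.2.2 := by tauto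
  refine ⟨w, hwc.imp (fun h => ⟨hw, h.symm⟩) (fun h => ⟨hw, h.symm⟩), ?_, ?_⟩ <;>
    rintro rfl <;> tauto

theorem two_mul_sub_one_le_ncard (h₁ : 3 ≤ n₁) (h₂ : 3 ≤ n₂) (h₃ : 3 ≤ n₃)
    {W : Set (Fin n₁ × Fin n₂ × Fin n₃)} (hW : IsResolving W) :
    2 * n₃ - 1 ≤ W.ncard := by
  have : Nontrivial (Fin n₃) := Fin.nontrivial_iff_two_le.2 (by omega)
  have : Nonempty (Fin n₁ × Fin n₂ × Fin n₃) :=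
    ⟨(⟨0, by omega⟩, ⟨0, by omega⟩, ⟨0, by omega⟩)⟩
  rw [ncard_eq_sum_ncard_block3]
  simpa using Fintype.two_mul_card_sub_one_le_sum _ fun c c' hcc =>
    (Set.three_le_ncard_of_forall_exists_ne_ne (Set.toFinite _)
      (exists_mem_block3_union_ne_ne h₁ h₂ h₃ hW hcc)).trans (Set.ncard_union_le _ _)

theorem isResolving_of_nodup_adjProfile (h₁ : 3 ≤ n₁) (h₂ : 3 ≤ n₂) (h₃ : 3 ≤ n₃)
    (L : List (Fin n₁ × Fin n₂ × Fin n₃))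
    (hL : ((univ.val.filter (· ∉ L)).map (adjProfile (HG n₁ n₂ n₃) L)).Nodup) :
    IsResolving {w | w ∈ L} := by
  refine (isResolving_iff h₁ h₂ h₃).2 fun x y hx hy hxy => ?_
  by_contra! hsame
  refine hxy (Multiset.inj_on_of_nodup_map hL x ?_ y ?_ ?_)
  · exact Multiset.mem_filter.2 ⟨mem_univ _, hx⟩
  · exact Multiset.mem_filter.2 ⟨mem_univ _, hy⟩
  · exact List.map_congr_left fun w hw => decide_eq_decide.2 (hsame w hw)

end HG

def landmarks : List (Fin 5 × Fin 7 × Fin 11) :=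
  [(0, 0, 0), (0, 1, 1), (0, 2, 2), (0, 3, 9),
    (1, 0, 3), (1, 1, 4), (1, 2, 5), (1, 3, 0), (1, 4, 1), (1, 5, 2),
    (2, 0, 6), (2, 1, 7), (2, 2, 8), (2, 3, 3), (2, 4, 4), (2, 5, 5),
    (3, 0, 9), (3, 3, 6), (3, 4, 7), (3, 5, 8), (4, 6, 10)]

theorem isResolving_landmarks : IsResolving {w | w ∈ landmarks} :=
  HG.isResolving_of_nodup_adjProfile (by norm_num) (by norm_num) (by norm_num) landmarks
    (by decide +kernel)

theorem ncard_landmarks : {w | w ∈ landmarks}.ncard = 21 := by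
  rw [← List.coe_toFinset, Set.ncard_coe_finset]
  rfl

theorem stmt19 :
    IsResolving ({(0, 0, 0), (0, 1, 1), (0, 2, 2), (0, 3, 9),
        (1, 0, 3), (1, 1, 4), (1, 2, 5), (1, 3, 0), (1, 4, 1), (1, 5, 2),
        (2, 0, 6), (2, 1, 7), (2, 2, 8), (2, 3, 3), (2, 4, 4), (2, 5, 5),
        (3, 0, 9), (3, 3, 6), (3, 4, 7), (3, 5, 8), (4, 6, 10)} :
      Set (Fin 5 × Fin 7 × Fin 11)) ∧
    ({(0, 0, 0), (0, 1, 1), (0, 2, 2), (0, 3, 9),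
        (1, 0, 3), (1, 1, 4), (1, 2, 5), (1, 3, 0), (1, 4, 1), (1, 5, 2),
        (2, 0, 6), (2, 1, 7), (2, 2, 8), (2, 3, 3), (2, 4, 4), (2, 5, 5),
        (3, 0, 9), (3, 3, 6), (3, 4, 7), (3, 5, 8), (4, 6, 10)} :
      Set (Fin 5 × Fin 7 × Fin 11)).ncard = 21 ∧
    metricDim 5 7 11 = 21 := by
  have hdim : metricDim 5 7 11 = 21 :=
    metricDim_eq_of_isResolving isResolving_landmarks ncard_landmarks fun _ hW =>
      HG.two_mul_sub_one_le_ncard (by norm_num) (by norm_num) (by norm_num) hW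
  refine ⟨?_, ?_, hdim⟩
  · convert isResolving_landmarks using 1
    ext
    simp [landmarks]
  · convert ncard_landmarks using 2
    ext
    simp [landmarks]
end
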